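/- For all q, ψ ∈ ℝ^{N²}, qᵀ( D_y((D_x q) ∗ ψ) − D_x((D_y q) ∗ ψ) ) = 0. In particular the semi-discretization J_Z preserves the discrete enstrophy Z(q) = (δ²/2) qᵀq. -/

import Mathlib

open Matrix
open scoped Kronecker

/-! The bracket `J_Z` is built from two skew-symmetric difference operators. Moving each
outer operator across the inner product flips its sign, and the two resulting terms
`(D_y q)ᵀ((D_x q) ∗ ψ)` and `(D_x q)ᵀ((D_y q) ∗ ψ)` coincide because `∗` is commutative. -/

noncomputable section

/-- The `N×N` cyclic shift matrix: `E i j = 1` iff `j ≡ i+1 (mod N)`. -/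
def shiftE (N : ℕ) : Matrix (Fin N) (Fin N) ℝ :=
  Matrix.of fun i j => if ((i : ℕ) + 1) % N = (j : ℕ) then 1 else 0

/-- The grid spacing `δ = 2π/N`. -/
def gridDelta (N : ℕ) : ℝ := 2 * Real.pi / N

/-- The central divided-difference matrix `D = (E - Eᵀ)/(2δ)`. -/
def Dmat (N : ℕ) : Matrix (Fin N) (Fin N) ℝ :=
  (2 * gridDelta N)⁻¹ • (shiftE N - (shiftE N)ᵀ)

/-- `D_x = I ⊗ D`. -/
def Dx (N : ℕ) : Matrix (Fin N × Fin N) (Fin N × Fin N) ℝ :=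
  (1 : Matrix (Fin N) (Fin N) ℝ) ⊗ₖ Dmat N

/-- `D_y = D ⊗ I`. -/
def Dy (N : ℕ) : Matrix (Fin N × Fin N) (Fin N × Fin N) ℝ :=
  Dmat N ⊗ₖ (1 : Matrix (Fin N) (Fin N) ℝ)

section SkewSymmetric

variable {R n m : Type*}

theorem Matrix.sub_transpose_self_transpose [AddCommGroup R] (A : Matrix n n R) :
    (A - Aᵀ)ᵀ = -(A - Aᵀ) := by
  rw [transpose_sub, transpose_transpose, neg_sub]

theorem Matrix.one_kronecker_transpose_of_transpose_eq_neg [CommRing R] [DecidableEq n]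
    {B : Matrix m m R} (hB : Bᵀ = -B) :
    ((1 : Matrix n n R) ⊗ₖ B)ᵀ = -((1 : Matrix n n R) ⊗ₖ B) := by
  rw [← kroneckerMap_transpose, transpose_one, hB, ← neg_one_smul R B, kronecker_smul,
    neg_one_smul]

theorem Matrix.kronecker_one_transpose_of_transpose_eq_neg [CommRing R] [DecidableEq m]
    {A : Matrix n n R} (hA : Aᵀ = -A) :
    (A ⊗ₖ (1 : Matrix m m R))ᵀ = -(A ⊗ₖ (1 : Matrix m m R)) := by
  rw [← kroneckerMap_transpose, transpose_one, hA, ← neg_one_smul R A, smul_kronecker,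
    neg_one_smul]

theorem Matrix.dotProduct_mulVec_of_transpose_eq_neg [CommRing R] [Fintype n]
    {M : Matrix n n R} (hM : Mᵀ = -M) (u v : n → R) :
    u ⬝ᵥ M *ᵥ v = -(M *ᵥ u ⬝ᵥ v) := by
  rw [dotProduct_mulVec, ← mulVec_transpose, hM, neg_mulVec, neg_dotProduct]

theorem dotProduct_mul_left_comm [CommSemiring R] [Fintype n] (u v w : n → R) :
    u ⬝ᵥ (v * w) = v ⬝ᵥ (u * w) := by
  simp only [dotProduct, Pi.mul_apply, mul_left_comm]

theorem Matrix.dotProduct_jacobian_eq_zero [CommRing R] [Fintype n] {A B : Matrix n n R}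
    (hA : Aᵀ = -A) (hB : Bᵀ = -B) (q ψ : n → R) :
    q ⬝ᵥ (B *ᵥ (A *ᵥ q * ψ) - A *ᵥ (B *ᵥ q * ψ)) = 0 := by
  rw [dotProduct_sub, dotProduct_mulVec_of_transpose_eq_neg hB,
    dotProduct_mulVec_of_transpose_eq_neg hA, dotProduct_mul_left_comm, sub_self]

end SkewSymmetric

theorem Dmat_transpose (N : ℕ) : (Dmat N)ᵀ = -Dmat N := by
  rw [Dmat, transpose_smul, sub_transpose_self_transpose, smul_neg]

theorem JZ_enstrophy_orthogonal_general (N : ℕ)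
    (q ψ : Fin N × Fin N → ℝ) :
    q ⬝ᵥ ((Dy N).mulVec ((Dx N).mulVec q * ψ) - (Dx N).mulVec ((Dy N).mulVec q * ψ))
      = 0 :=
  dotProduct_jacobian_eq_zero (one_kronecker_transpose_of_transpose_eq_neg (Dmat_transpose N))
    (kronecker_one_transpose_of_transpose_eq_neg (Dmat_transpose N)) q ψ

/-- `qᵀ( D_y((D_x q) ∗ ψ) − D_x((D_y q) ∗ ψ) ) = 0`, so the `J_Z`
semi-discretization preserves the discrete enstrophy `Z(q) = (δ²/2) qᵀq`. -/
theorem JZ_enstrophy_orthogonal (N : ℕ) (hN : 3 ≤ N)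
    (q ψ : Fin N × Fin N → ℝ) :
    q ⬝ᵥ ((Dy N).mulVec ((Dx N).mulVec q * ψ) - (Dx N).mulVec ((Dy N).mulVec q * ψ))
      = 0 :=
  JZ_enstrophy_orthogonal_general N q ψ
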